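/- Let 0 < λ ≤ 1 and let g_i ∈ (d_−, d_+) be defined by i/n = ∫_{g_i}^{d_+} p(x) dx where p is the Marčenko–Pastur density with parameter λ. Then for i ≤ n/2, g_i = d_+ − (3π λ^{3/4} d_+ i / (2n))^{2/3} + O((i/n)^{4/3}), uniformly in i. -/

import Mathlib

open Real

/-- Marčenko–Pastur density. -/
noncomputable def pMP (l x : ℝ) : ℝ :=
  Real.sqrt (((1 + Real.sqrt l) ^ 2 - x) * (x - (1 - Real.sqrt l) ^ 2)) /
    (2 * Real.pi * l * x)

/-!
Near the upper edge `d₊ = (1 + √λ)²` write `p(x) = √(d₊ - x) φ(x)` with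
`φ(x) = √(x - d₋) / (2πλx)`, which is Lipschitz on `[1, d₊]`. Integrating,
`F(s) := ∫_{d₊ - s}^{d₊} p = K s^{3/2} + O(s^{5/2})` with `K = 2φ(d₊)/3 = 2 / (3πλ^{3/4} d₊)`.
Inverting the three-halves power through `√s |r - s| ≤ 2 |r^{3/2} - s^{3/2}|` gives
`s = (F(s)/K)^{2/3} + O(s²) = (F(s)/K)^{2/3} + O(F(s)^{4/3})` for small `s`; for the other `s`,
`F(s)` is bounded below by monotonicity and the bound is trivial.
-/

open Set

lemma mul_abs_sq_sub_sq_le {A B : ℝ} (hA : 0 ≤ A) (hB : 0 ≤ B) :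
    B * |A ^ 2 - B ^ 2| ≤ 2 * |A ^ 3 - B ^ 3| := by
  have key : 0 ≤ 2 * A ^ 2 + A * B + B ^ 2 := by positivity
  rcases le_total A B with h | h
  · rw [abs_of_nonpos (by nlinarith), abs_of_nonpos (by nlinarith [pow_le_pow_left₀ hA h 3])]
    nlinarith [mul_nonneg (sub_nonneg.2 h) key]
  · rw [abs_of_nonneg (by nlinarith), abs_of_nonneg (by nlinarith [pow_le_pow_left₀ hB h 3])]
    nlinarith [mul_nonneg (sub_nonneg.2 h) key]

lemma sqrt_mul_abs_sub_le {r s : ℝ} (hr : 0 ≤ r) (hs : 0 ≤ s) :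
    √s * |r - s| ≤ 2 * |r ^ (3 / 2 : ℝ) - s ^ (3 / 2 : ℝ)| := by
  rw [rpow_div_two_eq_sqrt _ hr, rpow_div_two_eq_sqrt _ hs]
  simpa only [sq_sqrt hr, sq_sqrt hs, ← rpow_natCast, Nat.cast_ofNat]
    using mul_abs_sq_sub_sq_le (sqrt_nonneg r) (sqrt_nonneg s)

lemma rpow_three_halves_eq {x : ℝ} (hx : 0 ≤ x) : x ^ (3 / 2 : ℝ) = √x * x := by
  rw [rpow_div_two_eq_sqrt _ hx, ← sq_sqrt hx]
  norm_num
  ring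

lemma rpow_five_halves_eq {s : ℝ} (hs : 0 ≤ s) : s ^ (5 / 2 : ℝ) = s * s ^ (3 / 2 : ℝ) := by
  rw [rpow_div_two_eq_sqrt _ hs, rpow_div_two_eq_sqrt _ hs, ← sq_sqrt hs]
  norm_num
  ring

lemma half_mul_rpow_le {K L s t : ℝ} (hs : 0 ≤ s) (hLs : L * s ≤ K / 2)
    (ht : |t - K * s ^ (3 / 2 : ℝ)| ≤ L * s ^ (5 / 2 : ℝ)) : K / 2 * s ^ (3 / 2 : ℝ) ≤ t := by
  rw [rpow_five_halves_eq hs] at ht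
  have := (abs_le.1 ht).1
  have : 0 ≤ s ^ (3 / 2 : ℝ) := by positivity
  nlinarith

lemma abs_div_rpow_two_thirds_sub_le {K L s t : ℝ} (hK : 0 < K) (hs : 0 < s)
    (hLs : L * s ≤ K / 2) (ht : |t - K * s ^ (3 / 2 : ℝ)| ≤ L * s ^ (5 / 2 : ℝ)) :
    |(t / K) ^ (2 / 3 : ℝ) - s| ≤ 2 * L / K * (2 / K) ^ (4 / 3 : ℝ) * t ^ (4 / 3 : ℝ) := by
  have hlower := half_mul_rpow_le hs.le hLs ht
  have hs32 : 0 < s ^ (3 / 2 : ℝ) := by positivity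
  have ht0 : 0 < t := lt_of_lt_of_le (by positivity) hlower
  have hL : 0 ≤ L := nonneg_of_mul_nonneg_left ((abs_nonneg _).trans ht) (by positivity)
  set r := (t / K) ^ (2 / 3 : ℝ)
  have hr : r ^ (3 / 2 : ℝ) = t / K := by
    rw [← rpow_mul (by positivity)]
    norm_num
  have hcube : |r ^ (3 / 2 : ℝ) - s ^ (3 / 2 : ℝ)| ≤ L / K * (s * s ^ (3 / 2 : ℝ)) := by
    rw [hr, ← rpow_five_halves_eq hs.le,
      show t / K - s ^ (3 / 2 : ℝ) = (t - K * s ^ (3 / 2 : ℝ)) / K by field_simp, abs_div, abs_of_pos hK, div_le_iff₀ hK]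
    calc |t - K * s ^ (3 / 2 : ℝ)| ≤ L * s ^ (5 / 2 : ℝ) := ht
      _ = L / K * s ^ (5 / 2 : ℝ) * K := by field_simp
  have hsq : |r - s| ≤ 2 * L / K * s ^ 2 := by
    have hsqrt : 0 < √s := sqrt_pos.2 hs
    rw [← mul_le_mul_iff_right₀ hsqrt]
    calc √s * |r - s| ≤ 2 * |r ^ (3 / 2 : ℝ) - s ^ (3 / 2 : ℝ)| :=
          sqrt_mul_abs_sub_le (by positivity) hs.le
      _ ≤ 2 * (L / K * (s * s ^ (3 / 2 : ℝ))) := by gcongr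
      _ = √s * (2 * L / K * s ^ 2) := by
          rw [rpow_div_two_eq_sqrt _ hs.le, ← sq_sqrt hs.le]
          norm_num
          ring
  have hs2 : s ^ 2 ≤ (2 / K) ^ (4 / 3 : ℝ) * t ^ (4 / 3 : ℝ) := by
    have h32 : s ^ (3 / 2 : ℝ) ≤ 2 / K * t := by
      rw [div_mul_eq_mul_div, le_div_iff₀ hK]; linarith
    calc s ^ 2 = (s ^ (3 / 2 : ℝ)) ^ (4 / 3 : ℝ) := by
          rw [← rpow_mul hs.le, ← rpow_natCast]; norm_num
      _ ≤ (2 / K * t) ^ (4 / 3 : ℝ) := rpow_le_rpow (by positivity) h32 (by norm_num)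
      _ = (2 / K) ^ (4 / 3 : ℝ) * t ^ (4 / 3 : ℝ) := mul_rpow (by positivity) ht0.le
  calc |r - s| ≤ 2 * L / K * s ^ 2 := hsq
    _ ≤ 2 * L / K * ((2 / K) ^ (4 / 3 : ℝ) * t ^ (4 / 3 : ℝ)) := by gcongr
    _ = 2 * L / K * (2 / K) ^ (4 / 3 : ℝ) * t ^ (4 / 3 : ℝ) := by ring

lemma abs_div_rpow_two_thirds_sub_le_of_le {K S s t t₁ : ℝ} (hK : 0 < K) (ht₁ : 0 < t₁)
    (ht : t₁ ≤ t) (hs : 0 ≤ s) (hsS : s ≤ S) :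
    |(t / K) ^ (2 / 3 : ℝ) - s|
      ≤ ((t₁ / K) ^ (2 / 3 : ℝ) + S) / t₁ ^ (4 / 3 : ℝ) * t ^ (4 / 3 : ℝ) := by
  have hq : 1 ≤ t / t₁ := (one_le_div ht₁).2 ht
  have ht₀ : 0 ≤ t := ht₁.le.trans ht
  have hr : 0 ≤ (t / K) ^ (2 / 3 : ℝ) := by positivity
  calc |(t / K) ^ (2 / 3 : ℝ) - s| ≤ (t / K) ^ (2 / 3 : ℝ) + S := by
        rw [abs_le]; constructor <;> linarith
    _ = (t₁ / K) ^ (2 / 3 : ℝ) * (t / t₁) ^ (2 / 3 : ℝ) + S := by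
        rw [← mul_rpow (div_nonneg ht₁.le hK.le) (div_nonneg ht₀ ht₁.le)]
        field_simp
    _ ≤ (t₁ / K) ^ (2 / 3 : ℝ) * (t / t₁) ^ (4 / 3 : ℝ) + S * (t / t₁) ^ (4 / 3 : ℝ) := by
        gcongr ?_ + ?_
        · exact mul_le_mul_of_nonneg_left (rpow_le_rpow_of_exponent_le hq (by norm_num))
            (by positivity)
        · exact le_mul_of_one_le_right (hs.trans hsS) (one_le_rpow hq (by norm_num))
    _ = ((t₁ / K) ^ (2 / 3 : ℝ) + S) / t₁ ^ (4 / 3 : ℝ) * t ^ (4 / 3 : ℝ) := by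
        rw [div_rpow ht₀ ht₁.le]
        ring

theorem exists_abs_div_rpow_two_thirds_sub_le {F : ℝ → ℝ} {K L s₀ S : ℝ} (hK : 0 < K)
    (hL : 0 < L) (hs₀ : 0 < s₀) (hs₀S : s₀ < S) (hF : MonotoneOn F (Ioo 0 S))
    (hloc : ∀ s ∈ Ioc 0 s₀, |F s - K * s ^ (3 / 2 : ℝ)| ≤ L * s ^ (5 / 2 : ℝ)) :
    ∃ C > 0, ∀ s ∈ Ioo 0 S, |(F s / K) ^ (2 / 3 : ℝ) - s| ≤ C * F s ^ (4 / 3 : ℝ) := by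
  set s₁ := min s₀ (K / (2 * L))
  have hs₁ : 0 < s₁ := lt_min hs₀ (by positivity)
  have hs₁s₀ : s₁ ≤ s₀ := min_le_left _ _
  have hLs₁ : L * s₁ ≤ K / 2 :=
    calc L * s₁ ≤ L * (K / (2 * L)) := by gcongr; exact min_le_right _ _
      _ = K / 2 := by field_simp
  have hFs₁ : 0 < F s₁ :=
    lt_of_lt_of_le (by positivity) (half_mul_rpow_le hs₁.le hLs₁ (hloc s₁ ⟨hs₁, hs₁s₀⟩))
  set C₁ := 2 * L / K * (2 / K) ^ (4 / 3 : ℝ)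
  set C₂ := ((F s₁ / K) ^ (2 / 3 : ℝ) + S) / F s₁ ^ (4 / 3 : ℝ)
  refine ⟨max C₁ C₂, lt_max_of_lt_left (by positivity), fun s hs => ?_⟩
  rcases le_or_gt s s₁ with h | h
  · have hLs : L * s ≤ K / 2 := by nlinarith
    have hFs := half_mul_rpow_le hs.1.le hLs (hloc s ⟨hs.1, h.trans hs₁s₀⟩)
    have : 0 ≤ F s := le_trans (by have := hs.1; positivity) hFs
    calc |(F s / K) ^ (2 / 3 : ℝ) - s| ≤ C₁ * F s ^ (4 / 3 : ℝ) :=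
          abs_div_rpow_two_thirds_sub_le hK hs.1 hLs (hloc s ⟨hs.1, h.trans hs₁s₀⟩)
      _ ≤ max C₁ C₂ * F s ^ (4 / 3 : ℝ) := by gcongr; exact le_max_left _ _
  · have hmono : F s₁ ≤ F s := hF ⟨hs₁, hs₁s₀.trans_lt hs₀S⟩ hs h.le
    have : 0 ≤ F s := hFs₁.le.trans hmono
    calc |(F s / K) ^ (2 / 3 : ℝ) - s| ≤ C₂ * F s ^ (4 / 3 : ℝ) :=
          abs_div_rpow_two_thirds_sub_le_of_le hK hFs₁ hmono hs.1.le hs.2.le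
      _ ≤ max C₁ C₂ * F s ^ (4 / 3 : ℝ) := by gcongr; exact le_max_right _ _

lemma integral_sub_rpow (b g : ℝ) {p : ℝ} (hp : -1 < p) :
    ∫ x in g..b, (b - x) ^ p = (b - g) ^ (p + 1) / (p + 1) := by
  rw [intervalIntegral.integral_comp_sub_left (fun x => x ^ p), sub_self,
    integral_rpow (Or.inl hp), zero_rpow (by linarith), sub_zero]

lemma abs_integral_sqrt_mul_sub_le {φ : ℝ → ℝ} {g b M : ℝ} (hgb : g ≤ b)
    (hφ : ContinuousOn φ (Icc g b)) (hM : ∀ x ∈ Icc g b, |φ x - φ b| ≤ M * (b - x)) :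
    |(∫ x in g..b, √(b - x) * φ x) - 2 / 3 * φ b * (b - g) ^ (3 / 2 : ℝ)|
      ≤ 2 / 5 * M * (b - g) ^ (5 / 2 : ℝ) := by
  have hsqrt : Continuous fun x => √(b - x) := by fun_prop
  have hint_sqrt : ∫ x in g..b, √(b - x) = 2 / 3 * (b - g) ^ (3 / 2 : ℝ) := by
    simp_rw [sqrt_eq_rpow]
    rw [integral_sub_rpow b g (by norm_num)]
    norm_num
    ring
  have hdiff : (∫ x in g..b, √(b - x) * φ x) - 2 / 3 * φ b * (b - g) ^ (3 / 2 : ℝ)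
      = ∫ x in g..b, √(b - x) * (φ x - φ b) := by
    simp_rw [mul_sub]
    rw [intervalIntegral.integral_sub, intervalIntegral.integral_mul_const, hint_sqrt]
    · ring
    · exact (hsqrt.continuousOn.mul hφ).intervalIntegrable_of_Icc hgb
    · exact (hsqrt.mul continuous_const).intervalIntegrable _ _
  have hpointwise : ∀ x ∈ Icc g b, |√(b - x) * (φ x - φ b)| ≤ M * (b - x) ^ (3 / 2 : ℝ) := by
    intro x hx
    rw [abs_mul, abs_of_nonneg (sqrt_nonneg _), rpow_three_halves_eq (by linarith [hx.2])]
    calc √(b - x) * |φ x - φ b| ≤ √(b - x) * (M * (b - x)) := by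
          gcongr; exact hM x hx
      _ = M * (√(b - x) * (b - x)) := by ring
  rw [hdiff]
  calc |∫ x in g..b, √(b - x) * (φ x - φ b)|
      ≤ ∫ x in g..b, |√(b - x) * (φ x - φ b)| :=
        intervalIntegral.abs_integral_le_integral_abs hgb
    _ ≤ ∫ x in g..b, M * (b - x) ^ (3 / 2 : ℝ) := by
        refine intervalIntegral.integral_mono_on hgb ?_ ?_ hpointwise
        · exact ((hsqrt.continuousOn.mul (hφ.sub continuousOn_const)).abs).intervalIntegrable_of_Icc
            hgb
        · exact (continuous_const.mul ((continuous_const.sub continuous_id).rpow_const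
            (fun _ => Or.inr (by norm_num)))).intervalIntegrable _ _
    _ = 2 / 5 * M * (b - g) ^ (5 / 2 : ℝ) := by
        rw [intervalIntegral.integral_const_mul, integral_sub_rpow b g (by norm_num)]
        norm_num
        ring

lemma abs_sqrt_sub_div_sub_le {a b x : ℝ} (ha : 0 ≤ a) (hax : a ≤ x) (hxb : x ≤ b) (hx : 0 < x)
    (hab : a < b) : |√(x - a) / x - √(b - a) / b| ≤ (b - x) / (x * √(b - a)) := by
  set u := √(x - a)
  set w := √(b - a)
  have hu : 0 ≤ u := sqrt_nonneg _
  have hw : 0 < w := sqrt_pos.2 (by linarith)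
  have hu2 : u ^ 2 = x - a := sq_sqrt (by linarith)
  have hw2 : w ^ 2 = b - a := sq_sqrt (by linarith)
  have hb : 0 < b := by linarith
  have hfactor : (u * b - w * x) * (u + w) = (b - x) * (u * w - a) := by
    linear_combination b * hu2 - x * hw2
  have huw : |u * w - a| ≤ b := by
    have : u ≤ w := sqrt_le_sqrt (by linarith)
    rw [abs_le]; constructor <;> nlinarith
  have hnum : |u * b - w * x| * w ≤ (b - x) * b :=
    calc |u * b - w * x| * w ≤ |u * b - w * x| * (u + w) := by gcongr; linarith
      _ = (b - x) * |u * w - a| := by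
        rw [← abs_of_pos (by linarith : 0 < u + w), ← abs_mul, hfactor, abs_mul,
          abs_of_nonneg (by linarith : 0 ≤ b - x)]
      _ ≤ (b - x) * b := by gcongr
  rw [div_sub_div _ _ hx.ne' hb.ne', abs_div, abs_of_pos (mul_pos hx hb),
    div_le_div_iff₀ (mul_pos hx hb) (mul_pos hx hw), mul_comm x w]
  nlinarith

lemma abs_mul_sqrt_sub_div_sub_le {c a b x : ℝ} (hc : 0 ≤ c) (ha : 0 ≤ a) (hax : a ≤ x)
    (hxb : x ≤ b) (hx : 1 ≤ x) (hab : a < b) :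
    |c * (√(x - a) / x) - c * (√(b - a) / b)| ≤ c / √(b - a) * (b - x) := by
  rw [← mul_sub, abs_mul, abs_of_nonneg hc, div_mul_eq_mul_div, mul_div_assoc]
  gcongr
  calc |√(x - a) / x - √(b - a) / b| ≤ (b - x) / (x * √(b - a)) :=
        abs_sqrt_sub_div_sub_le ha hax hxb (by linarith) hab
    _ ≤ (b - x) / √(b - a) := by
        gcongr
        exact le_mul_of_one_le_left (sqrt_nonneg _) hx

lemma pMP_nonneg {l : ℝ} (hl : 0 ≤ l) (x : ℝ) : 0 ≤ pMP l x := by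
  rcases le_or_gt x 0 with hx | hx
  · rw [pMP, sqrt_eq_zero'.2 (mul_nonpos_of_nonneg_of_nonpos (by nlinarith [sqrt_nonneg l])
      (by nlinarith)), zero_div]
  · exact div_nonneg (sqrt_nonneg _) (by positivity)

lemma continuousOn_pMP {l : ℝ} (hl : l ≠ 0) : ContinuousOn (pMP l) (Ioi 0) := by
  unfold pMP
  exact ContinuousOn.div (by fun_prop) (by fun_prop)
    fun x hx => mul_ne_zero (by positivity) (ne_of_gt hx)

lemma pMP_eq_sqrt_mul (l : ℝ) {x : ℝ} (hx : x ≤ (1 + √l) ^ 2) :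
    pMP l x = √((1 + √l) ^ 2 - x) * ((2 * π * l)⁻¹ * (√(x - (1 - √l) ^ 2) / x)) := by
  rw [pMP, sqrt_mul (by linarith)]
  ring

lemma inv_two_pi_mul_sqrt_div_eq {l : ℝ} (hl : 0 < l) :
    (2 * π * l)⁻¹ * (√((1 + √l) ^ 2 - (1 - √l) ^ 2) / (1 + √l) ^ 2)
      = (π * l ^ (3 / 4 : ℝ) * (1 + √l) ^ 2)⁻¹ := by
  have hfourth : √(√l) * l ^ (3 / 4 : ℝ) = l := by
    rw [sqrt_eq_rpow, sqrt_eq_rpow, ← rpow_mul hl.le, ← rpow_add hl]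
    norm_num
  have : (1 + √l) ^ 2 - (1 - √l) ^ 2 = 2 ^ 2 * √l := by ring
  rw [this, sqrt_mul (by positivity), sqrt_sq (by norm_num)]
  have : 0 < l ^ (3 / 4 : ℝ) := by positivity
  field_simp
  exact hfourth

lemma intervalIntegrable_pMP {l a b : ℝ} (hl : l ≠ 0) (ha : 0 < a) (hb : 0 < b) :
    IntervalIntegrable (pMP l) MeasureTheory.volume a b :=
  ((continuousOn_pMP hl).mono fun _ hx => lt_of_lt_of_le (lt_min ha hb) hx.1).intervalIntegrable

lemma monotoneOn_integral_pMP {l : ℝ} (hl : 0 < l) :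
    MonotoneOn (fun s => ∫ x in ((1 + √l) ^ 2 - s)..((1 + √l) ^ 2), pMP l x)
      (Ioo 0 ((1 + √l) ^ 2)) := by
  intro s₁ hs₁ s₂ hs₂ hs
  dsimp only
  rw [← intervalIntegral.integral_add_adjacent_intervals (a := (1 + √l) ^ 2 - s₂)
    (b := (1 + √l) ^ 2 - s₁)
    (intervalIntegrable_pMP hl.ne' (by linarith [hs₂.2]) (by linarith [hs₁.2]))
    (intervalIntegrable_pMP hl.ne' (by linarith [hs₁.2]) (by positivity))]
  exact le_add_of_nonneg_left
    (intervalIntegral.integral_nonneg (by linarith) fun x _ => pMP_nonneg hl.le x)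

lemma exists_abs_integral_pMP_sub_le {l : ℝ} (hl : 0 < l) :
    ∃ L > 0, ∀ s ∈ Ioc 0 (2 * √l),
      |(∫ x in ((1 + √l) ^ 2 - s)..((1 + √l) ^ 2), pMP l x)
        - 2 / (3 * π * l ^ (3 / 4 : ℝ) * (1 + √l) ^ 2) * s ^ (3 / 2 : ℝ)|
        ≤ L * s ^ (5 / 2 : ℝ) := by
  set b := (1 + √l) ^ 2
  set a := (1 - √l) ^ 2
  set φ : ℝ → ℝ := fun x => (2 * π * l)⁻¹ * (√(x - a) / x)
  have hsl : 0 < √l := sqrt_pos.2 hl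
  have hab : a < b := by simp only [a, b]; nlinarith
  refine ⟨2 / 5 * ((2 * π * l)⁻¹ / √(b - a)), by have := sqrt_pos.2 (sub_pos.2 hab); positivity,
    fun s hs => ?_⟩
  have hsb : 1 + l ≤ b - s := by
    simp only [b]; nlinarith [hs.2, sq_sqrt hl.le]
  have ha : a ≤ 1 + l := by simp only [a]; nlinarith [sq_sqrt hl.le]
  have hφ : ContinuousOn φ (Icc (b - s) b) := by
    refine continuousOn_const.mul (ContinuousOn.div (by fun_prop) continuousOn_id ?_)
    intro x hx
    exact (show (0 : ℝ) < x by linarith [hx.1]).ne'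
  have hlip : ∀ x ∈ Icc (b - s) b, |φ x - φ b| ≤ (2 * π * l)⁻¹ / √(b - a) * (b - x) :=
    fun x hx => abs_mul_sqrt_sub_div_sub_le (by positivity) (by positivity)
      (by linarith [hx.1]) hx.2 (by linarith [hx.1]) hab
  have hedge := abs_integral_sqrt_mul_sub_le (by linarith [hs.1]) hφ hlip
  have hint : ∫ x in (b - s)..b, pMP l x = ∫ x in (b - s)..b, √(b - x) * φ x :=
    intervalIntegral.integral_congr fun x hx =>
      pMP_eq_sqrt_mul l (by rw [uIcc_of_le (by linarith [hs.1])] at hx; exact hx.2)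
  have hcoef : 2 / 3 * φ b = 2 / (3 * π * l ^ (3 / 4 : ℝ) * b) := by
    simp only [φ]
    rw [inv_two_pi_mul_sqrt_div_eq hl]
    simp only [b]
    field_simp
  rw [sub_sub_cancel, hcoef] at hedge
  rw [hint]
  linarith

theorem classical_location_asymptotics_general (l : ℝ) (hl0 : 0 < l) :
    ∃ C : ℝ, 0 < C ∧ ∀ (n i : ℕ), 1 ≤ i → 2 * i ≤ n → ∀ g : ℝ,
      (1 - Real.sqrt l) ^ 2 < g → g < (1 + Real.sqrt l) ^ 2 →
      (i : ℝ) / n = (∫ x in g..((1 + Real.sqrt l) ^ 2), pMP l x) →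
      |g - ((1 + Real.sqrt l) ^ 2 -
          (3 * Real.pi * l ^ ((3 : ℝ) / 4) * (1 + Real.sqrt l) ^ 2 * i /
            (2 * n)) ^ ((2 : ℝ) / 3))|
        ≤ C * ((i : ℝ) / n) ^ ((4 : ℝ) / 3) := by
  have hsl : 0 < √l := sqrt_pos.2 hl0
  set K := 2 / (3 * π * l ^ (3 / 4 : ℝ) * (1 + √l) ^ 2)
  have hK : 0 < K := by positivity
  obtain ⟨L, hL, hloc⟩ := exists_abs_integral_pMP_sub_le hl0
  obtain ⟨C, hC, hbound⟩ := exists_abs_div_rpow_two_thirds_sub_le hK hL (by positivity)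
    (by nlinarith) (monotoneOn_integral_pMP hl0) hloc
  refine ⟨C, hC, fun n i _ _ g hg₁ hg₂ heq => ?_⟩
  have hs : (1 + √l) ^ 2 - g ∈ Ioo 0 ((1 + √l) ^ 2) :=
    ⟨by linarith, by nlinarith [sq_nonneg (1 - √l)]⟩
  have hX : 3 * π * l ^ (3 / 4 : ℝ) * (1 + √l) ^ 2 * i / (2 * n) = (i / n) / K := by
    simp only [K]
    field_simp
  have hF := hbound _ hs
  rw [sub_sub_cancel, ← heq] at hF
  rw [hX]
  convert hF using 2
  ring

/-- the classical locations `g_i`, defined by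
`i/n = ∫_{g_i}^{d₊} p(x) dx`, satisfy uniformly for `i ≤ n/2`
`g_i = d₊ - (3πλ^{3/4}d₊ i/(2n))^{2/3} + O((i/n)^{4/3})`. -/
theorem classical_location_asymptotics (l : ℝ) (hl0 : 0 < l) (hl1 : l ≤ 1) :
    ∃ C : ℝ, 0 < C ∧ ∀ (n i : ℕ), 1 ≤ i → 2 * i ≤ n → ∀ g : ℝ,
      (1 - Real.sqrt l) ^ 2 < g → g < (1 + Real.sqrt l) ^ 2 →
      (i : ℝ) / n = (∫ x in g..((1 + Real.sqrt l) ^ 2), pMP l x) →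
      |g - ((1 + Real.sqrt l) ^ 2 -
          (3 * Real.pi * l ^ ((3 : ℝ) / 4) * (1 + Real.sqrt l) ^ 2 * i /
            (2 * n)) ^ ((2 : ℝ) / 3))|
        ≤ C * ((i : ℝ) / n) ^ ((4 : ℝ) / 3) :=
  classical_location_asymptotics_general l hl0
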